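/- Suppose (T₁, f₁) ∈ Q*, T₁ ≤_Q T₂, and either lim_{α(T₁)}((T₂)_{[<α(T₁)]}) \ (T₂)_{[α(T₁)]} is empty or its unique element does not belong to the range of f₁. Then there exists a function f₂ : T₂ → lim_{α(T₂)}(T₂) such that (T₁, f₁) ≤ (T₂, f₂) ∈ Q*, i.e., f₂ is a witness for T₂ satisfying f₁(η) ⊴ f₂(η) for all η ∈ T₁. -/

import Mathlib

open Ordinal Set Cardinal

/-- A transfinite binary sequence: a length and values, zero beyond the length. -/
structure BSeq where
  len : Ordinal.{0}
  val : Ordinal.{0} → Bool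
  val_eq_false : ∀ β, len ≤ β → val β = false

namespace BSeq

/-- The empty sequence. -/
def nil : BSeq := ⟨0, fun _ => false, fun _ _ => rfl⟩

/-- Restriction `η↾β` of a sequence to length `β`. -/
noncomputable def restrict (η : BSeq) (β : Ordinal) : BSeq :=
  ⟨min η.len β, fun γ => if γ < β then η.val γ else false, by
    intro γ hγ
    rcases min_le_iff.mp hγ with h | h
    · by_cases hb : γ < β
      · simpa [hb] using η.val_eq_false γ h
      · simp [hb]
    · simp [not_lt.mpr h]⟩

/-- `ν ⊴ η` : `ν` is an initial segment of `η`. -/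
def IsInitSeg (ν η : BSeq) : Prop :=
  ν.len ≤ η.len ∧ ∀ β < ν.len, ν.val β = η.val β

/-- `ν ◁ η` : `ν` is a proper initial segment of `η`. -/
def IsStrictInitSeg (ν η : BSeq) : Prop :=
  ν.IsInitSeg η ∧ ν.len < η.len

/-- `η⌢⟨b⟩`, appending one bit. -/
noncomputable def snoc (η : BSeq) (b : Bool) : BSeq :=
  ⟨η.len + 1, fun β => if β = η.len then b else η.val β, by
    intro β hβ
    have h1 : η.len < β := by
      exact lt_of_lt_of_le (lt_add_one η.len) hβ
    try simp only []
    rw [if_neg (ne_of_gt h1)]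
    exact η.val_eq_false β h1.le⟩

end BSeq

/-- The level `T_{[β]} = T ∩ 2^β`. -/
def level (T : Set BSeq) (β : Ordinal) : Set BSeq := {η ∈ T | η.len = β}

/-- `T_{[<β]} = T ∩ 2^{<β}`. -/
def levelLT (T : Set BSeq) (β : Ordinal) : Set BSeq := {η ∈ T | η.len < β}

/-- `lim_δ(T) = {η ∈ 2^δ : ∀ β < δ, η↾β ∈ T}`. -/
def limAt (T : Set BSeq) (δ : Ordinal) : Set BSeq :=
  {η | η.len = δ ∧ ∀ β < δ, η.restrict β ∈ T}

/-- `T ⊆ 2^{<α}` is an `α`-tree. -/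
structure IsTree (α : Ordinal) (T : Set BSeq) : Prop where
  limit : Order.IsSuccLimit α
  len_lt : ∀ η ∈ T, η.len < α
  nil_mem : BSeq.nil ∈ T
  downClosed : ∀ ν η : BSeq, ν.IsStrictInitSeg η → η ∈ T → ν ∈ T
  succ_mem : ∀ η ∈ T, ∀ b : Bool, η.snoc b ∈ T
  ext_mem : ∀ η ∈ T, ∀ β, η.len ≤ β → β < α → ∃ ρ ∈ T, η.IsInitSeg ρ ∧ ρ.len = β

/-- `T` has true height `α`: every node lies on a cofinal branch through `T`. -/
def TrueHeight (α : Ordinal) (T : Set BSeq) : Prop :=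
  ∀ η ∈ T, ∃ ν : BSeq, ν.len = α ∧ η.IsStrictInitSeg ν ∧ ∀ β < α, ν.restrict β ∈ T

/-- A condition of the forcing `Q`: a tree of true height `α` (a limit ordinal)
omitting at most one limit point at each limit level. -/
structure IsCond (α : Ordinal) (T : Set BSeq) : Prop where
  tree : IsTree α T
  trueHeight : TrueHeight α T
  omits_le_one : ∀ δ < α, Order.IsSuccLimit δ → (limAt T δ \ level T δ).Subsingleton

/-- The end-extension order of `Q`. -/
def QLe (α₁ : Ordinal) (T₁ : Set BSeq) (α₂ : Ordinal) (T₂ : Set BSeq) : Prop :=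
  α₁ ≤ α₂ ∧ T₁ = levelLT T₂ α₁

/-- `f` is a witness for `T` (of height `α`). -/
def IsWitness (α : Ordinal) (T : Set BSeq) (f : BSeq → BSeq) : Prop :=
  ∀ η ∈ T, f η ∈ limAt T α ∧ η.IsStrictInitSeg (f η)

/-- The order of `Q^*`. -/
def QsLe (α₁ : Ordinal) (T₁ : Set BSeq) (f₁ : BSeq → BSeq)
    (α₂ : Ordinal) (T₂ : Set BSeq) (f₂ : BSeq → BSeq) : Prop :=
  QLe α₁ T₁ α₂ T₂ ∧ ∀ η ∈ T₁, (f₁ η).IsInitSeg (f₂ η)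

/-- `C` is a club (closed unbounded) subset of `μ`. -/
def IsClubIn (C : Set Ordinal) (μ : Ordinal) : Prop :=
  C ⊆ Set.Iio μ ∧
  (∀ δ < μ, Order.IsSuccLimit δ → (∀ β < δ, ∃ γ ∈ C, β < γ ∧ γ < δ) → δ ∈ C) ∧
  (∀ β < μ, ∃ γ ∈ C, β < γ ∧ γ < μ)

/-- `S` is stationary in `μ`. -/
def IsStationaryIn (S : Set Ordinal) (μ : Ordinal) : Prop :=
  ∀ C, IsClubIn C μ → (S ∩ C).Nonempty

/-- The set of accumulation points of a set of ordinals. -/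
def accPts (C : Set Ordinal) : Set Ordinal :=
  {β | 0 < β ∧ ∀ γ < β, ∃ δ ∈ C, γ < δ ∧ δ < β}

namespace BSeq

lemma IsInitSeg.refl (η : BSeq) : η.IsInitSeg η :=
  ⟨le_rfl, fun _ _ => rfl⟩

lemma IsInitSeg.trans_isStrictInitSeg {a b c : BSeq} (hab : a.IsInitSeg b)
    (hbc : b.IsStrictInitSeg c) : a.IsStrictInitSeg c := by
  refine ⟨⟨hab.1.trans hbc.1.1, fun β hβ => ?_⟩, hab.1.trans_lt hbc.2⟩
  rw [hab.2 β hβ, hbc.1.2 β (hβ.trans_le hab.1)]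

end BSeq

lemma TrueHeight.exists_mem_limAt {α : Ordinal} {T : Set BSeq} (hT : TrueHeight α T)
    {η : BSeq} (hη : η ∈ T) : ∃ ν ∈ limAt T α, η.IsStrictInitSeg ν := by
  obtain ⟨ν, hνlen, hην, hνT⟩ := hT η hη
  exact ⟨ν, ⟨hνlen, hνT⟩, hην⟩

lemma TrueHeight.exists_witness_extending {α : Ordinal} {T : Set BSeq} (hT : TrueHeight α T)
    (g : BSeq → BSeq) (hg : ∀ η ∈ T, g η ∈ T ∧ η.IsInitSeg (g η)) :
    ∃ f : BSeq → BSeq, IsWitness α T f ∧ ∀ η ∈ T, (g η).IsInitSeg (f η) := by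
  have branch : ∀ η ∈ T, ∃ ν ∈ limAt T α, (g η).IsStrictInitSeg ν :=
    fun η hη => hT.exists_mem_limAt (hg η hη).1
  choose! f hfT hgf using branch
  exact ⟨f, fun η hη => ⟨hfT η hη, (hg η hη).2.trans_isStrictInitSeg (hgf η hη)⟩,
    fun η hη => (hgf η hη).1⟩

/-- `f₁ η` is a limit point of `T₁ = (T₂)_{[<α₁]}` at level `α₁`, and `hstar` says it is not the
one omitted by `T₂`. -/
lemma witness_mem_of_not_omitted {α₁ α₂ : Ordinal} {T₁ T₂ : Set BSeq} {f₁ : BSeq → BSeq}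
    (hf₁ : IsWitness α₁ T₁ f₁) (hle : QLe α₁ T₁ α₂ T₂)
    (hstar : ∀ ν ∈ limAt (levelLT T₂ α₁) α₁ \ level T₂ α₁, ∀ η ∈ T₁, f₁ η ≠ ν)
    {η : BSeq} (hη : η ∈ T₁) : f₁ η ∈ T₂ := by
  by_contra hnot
  have hlim : f₁ η ∈ limAt (levelLT T₂ α₁) α₁ := hle.2 ▸ (hf₁ η hη).1
  exact hstar (f₁ η) ⟨hlim, fun h => hnot h.1⟩ η hη rfl

theorem stmt4_general (α₁ α₂ : Ordinal) (T₁ T₂ : Set BSeq) (f₁ : BSeq → BSeq)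
    (h₂ : IsCond α₂ T₂) (hf₁ : IsWitness α₁ T₁ f₁)
    (hle : QLe α₁ T₁ α₂ T₂)
    (hstar : ∀ ν ∈ limAt (levelLT T₂ α₁) α₁ \ level T₂ α₁, ∀ η ∈ T₁, f₁ η ≠ ν) :
    ∃ f₂ : BSeq → BSeq, IsWitness α₂ T₂ f₂ ∧ ∀ η ∈ T₁, (f₁ η).IsInitSeg (f₂ η) := by
  classical
  have hT₁T₂ : T₁ ⊆ T₂ := fun η hη => (hle.2 ▸ hη : η ∈ levelLT T₂ α₁).1
  have hg : ∀ η ∈ T₂, T₁.piecewise f₁ id η ∈ T₂ ∧ η.IsInitSeg (T₁.piecewise f₁ id η) := by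
    intro η hη
    by_cases hη₁ : η ∈ T₁
    · rw [Set.piecewise_eq_of_mem _ _ _ hη₁]
      exact ⟨witness_mem_of_not_omitted hf₁ hle hstar hη₁, (hf₁ η hη₁).2.1⟩
    · rw [Set.piecewise_eq_of_notMem _ _ _ hη₁]
      exact ⟨hη, BSeq.IsInitSeg.refl η⟩
  obtain ⟨f₂, hf₂, hgf₂⟩ := h₂.trueHeight.exists_witness_extending _ hg
  refine ⟨f₂, hf₂, fun η hη => ?_⟩
  simpa only [Set.piecewise_eq_of_mem _ _ _ hη] using hgf₂ η (hT₁T₂ hη)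

theorem stmt4 (α₁ α₂ : Ordinal) (T₁ T₂ : Set BSeq) (f₁ : BSeq → BSeq)
    (h₁ : IsCond α₁ T₁) (h₂ : IsCond α₂ T₂) (hf₁ : IsWitness α₁ T₁ f₁)
    (hle : QLe α₁ T₁ α₂ T₂)
    (hstar : ∀ ν ∈ limAt (levelLT T₂ α₁) α₁ \ level T₂ α₁, ∀ η ∈ T₁, f₁ η ≠ ν) :
    ∃ f₂ : BSeq → BSeq, IsWitness α₂ T₂ f₂ ∧ ∀ η ∈ T₁, (f₁ η).IsInitSeg (f₂ η) :=
  stmt4_general α₁ α₂ T₁ T₂ f₁ h₂ hf₁ hle hstar
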